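/- For all real numbers t < T, x and all σ > 0, if the log-strike k satisfies the zero-vanna condition x − k = σ²(T−t)/2 (equivalently d2(t,T,x,k,σ) = 0), then the third derivative of the Black–Scholes price with respect to the volatility parameter equals ∂³BS/∂σ³(t,T,x,k,σ) = −(T−t) · ∂BS/∂σ(t,T,x,k,σ) = −e^x (T−t)^{3/2} φ(d1(t,T,x,k,σ)). -/

import Mathlib

noncomputable section

/-- Standard normal density. -/
def phi (z : ℝ) : ℝ := (Real.sqrt (2 * Real.pi))⁻¹ * Real.exp (-z ^ 2 / 2)

/-- Standard normal cumulative distribution function. -/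
def N (y : ℝ) : ℝ := ∫ z in Set.Iic y, phi z

/-- Black–Scholes auxiliary quantity `d₁`. -/
def d1 (t T x k σ : ℝ) : ℝ :=
  (x - k) / (σ * Real.sqrt (T - t)) + σ * Real.sqrt (T - t) / 2

/-- Black–Scholes auxiliary quantity `d₂`. -/
def d2 (t T x k σ : ℝ) : ℝ :=
  (x - k) / (σ * Real.sqrt (T - t)) - σ * Real.sqrt (T - t) / 2

/-- Black–Scholes call price with log-spot `x`, log-strike `k`,
time to maturity `T - t` and volatility `σ`. -/
def BS (t T x k σ : ℝ) : ℝ :=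
  Real.exp x * N (d1 t T x k σ) - Real.exp k * N (d2 t T x k σ)

/-!
Differentiating in `σ`, the terms coming from `N (d1)` and `N (d2)` combine, through the identity
`eˣ φ(d1) = eᵏ φ(d2)`, into the vega `eˣ √τ φ(d1)` (`τ = T - t`); since `∂d1/∂σ = -d2/σ`, the volga
is `vega · d1 d2 / σ`. Under the zero-vanna condition `d2 = 0`, so in the next derivative only the
factor `d2` contributes, giving `-(d1/σ)² · vega = -τ · vega` because `d1 = σ√τ` there.
-/

open Real Set MeasureTheory Topology

lemma hasDerivAt_phi (z : ℝ) : HasDerivAt phi (-z * phi z) z := by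
  have hexponent : HasDerivAt (fun w : ℝ => -w ^ 2 / 2) (-z) z :=
    ((hasDerivAt_pow 2 z).neg.div_const 2).congr_deriv (by ring)
  exact (hexponent.exp.const_mul (√(2 * π))⁻¹).congr_deriv (by unfold phi; ring)

lemma integrable_phi : Integrable phi := by
  convert (integrable_exp_neg_mul_sq (b := 1 / 2) (by norm_num)).const_mul (√(2 * π))⁻¹ using 2
  unfold phi; ring_nf

lemma hasDerivAt_integral_Iic {E : Type*} [NormedAddCommGroup E] [NormedSpace ℝ E]
    [CompleteSpace E] {f : ℝ → E} (hf : Integrable f) (hc : Continuous f) (y : ℝ) :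
    HasDerivAt (fun y => ∫ z in Iic y, f z) (f y) y := by
  have hsplit : (fun y => ∫ z in Iic y, f z) =
      fun y => (∫ z in (0 : ℝ)..y, f z) + ∫ z in Iic 0, f z := by
    funext y
    rw [← intervalIntegral.integral_Iic_sub_Iic hf.integrableOn hf.integrableOn, sub_add_cancel]
  rw [hsplit]
  exact (intervalIntegral.integral_hasDerivAt_right hf.intervalIntegrable
    (hc.stronglyMeasurableAtFilter _ _) hc.continuousAt).add_const _

lemma hasDerivAt_N (y : ℝ) : HasDerivAt N (phi y) y :=
  hasDerivAt_integral_Iic integrable_phi (by unfold phi; fun_prop) y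

def vega (t T x k s : ℝ) : ℝ := exp x * √(T - t) * phi (d1 t T x k s)

def volga (t T x k s : ℝ) : ℝ := vega t T x k s * (d1 t T x k s * d2 t T x k s / s)

section Greeks

variable {t T x k : ℝ}

lemma d1_sub_d2 (s : ℝ) : d1 t T x k s - d2 t T x k s = s * √(T - t) := by
  unfold d1 d2; ring

lemma d1_sq_sub_d2_sq {s : ℝ} (hs : s ≠ 0) (htT : t < T) :
    d1 t T x k s ^ 2 - d2 t T x k s ^ 2 = 2 * (x - k) := by
  have hτ : √(T - t) ≠ 0 := (Real.sqrt_pos.2 (sub_pos.2 htT)).ne'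
  unfold d1 d2
  field_simp
  ring

lemma exp_mul_phi_d1 {s : ℝ} (hs : s ≠ 0) (htT : t < T) :
    exp x * phi (d1 t T x k s) = exp k * phi (d2 t T x k s) := by
  have hexponent : x + -d1 t T x k s ^ 2 / 2 = k + -d2 t T x k s ^ 2 / 2 := by
    linarith [d1_sq_sub_d2_sq (x := x) (k := k) hs htT]
  unfold phi
  simp only [mul_left_comm (exp _), ← exp_add, hexponent]

lemma hasDerivAt_d1 {s : ℝ} (hs : s ≠ 0) :
    HasDerivAt (d1 t T x k) (-d2 t T x k s / s) s := by
  have hform : d1 t T x k = fun u => (x - k) / √(T - t) * u⁻¹ + √(T - t) / 2 * u := by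
    funext u; unfold d1; rw [mul_comm u, ← div_div]; ring
  rw [hform]
  refine (((hasDerivAt_inv hs).const_mul _).add ((hasDerivAt_id s).const_mul _)).congr_deriv ?_
  unfold d2; field_simp; ring

lemma hasDerivAt_d2 {s : ℝ} (hs : s ≠ 0) :
    HasDerivAt (d2 t T x k) (-d1 t T x k s / s) s := by
  have hform : d2 t T x k = fun u => (x - k) / √(T - t) * u⁻¹ - √(T - t) / 2 * u := by
    funext u; unfold d2; rw [mul_comm u, ← div_div]; ring
  rw [hform]
  refine (((hasDerivAt_inv hs).const_mul _).sub ((hasDerivAt_id s).const_mul _)).congr_deriv ?_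
  unfold d1; field_simp; ring

lemma hasDerivAt_BS {s : ℝ} (hs : s ≠ 0) (htT : t < T) :
    HasDerivAt (BS t T x k) (vega t T x k s) s := by
  refine ((((hasDerivAt_N _).comp s (hasDerivAt_d1 hs)).const_mul (exp x)).sub
    (((hasDerivAt_N _).comp s (hasDerivAt_d2 hs)).const_mul (exp k))).congr_deriv ?_
  rw [← mul_assoc, ← mul_assoc, ← exp_mul_phi_d1 hs htT, vega]
  field_simp
  linear_combination phi (d1 t T x k s) * d1_sub_d2 (t := t) (T := T) (x := x) (k := k) s

lemma hasDerivAt_vega {s : ℝ} (hs : s ≠ 0) :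
    HasDerivAt (vega t T x k) (volga t T x k s) s := by
  refine (((hasDerivAt_phi _).comp s (hasDerivAt_d1 hs)).const_mul
    (exp x * √(T - t))).congr_deriv ?_
  unfold volga vega
  field_simp

lemma hasDerivAt_volga_of_d2_eq_zero {s : ℝ} (hs : s ≠ 0) (h0 : d2 t T x k s = 0) :
    HasDerivAt (volga t T x k) (-(d1 t T x k s / s) ^ 2 * vega t T x k s) s := by
  refine ((hasDerivAt_vega hs).mul
    (((hasDerivAt_d1 hs).mul (hasDerivAt_d2 hs)).div (hasDerivAt_id s) hs)).congr_deriv ?_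
  simp only [Pi.mul_apply, Pi.div_apply, id, h0]
  field_simp
  ring

lemma iteratedDeriv_three_BS_of_d2_eq_zero {s : ℝ} (hs : s ≠ 0) (htT : t < T)
    (h0 : d2 t T x k s = 0) :
    iteratedDeriv 3 (BS t T x k) s = -(d1 t T x k s / s) ^ 2 * vega t T x k s := by
  have hvega : deriv (BS t T x k) =ᶠ[𝓝 s] vega t T x k :=
    eventually_ne_nhds hs |>.mono fun u hu => (hasDerivAt_BS hu htT).deriv
  have hvolga : deriv (deriv (BS t T x k)) =ᶠ[𝓝 s] volga t T x k :=
    hvega.deriv.trans (eventually_ne_nhds hs |>.mono fun u hu => (hasDerivAt_vega hu).deriv)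
  rw [iteratedDeriv_eq_iterate]
  simp only [Function.iterate_succ_apply', Function.iterate_zero_apply]
  rw [hvolga.deriv_eq]
  exact (hasDerivAt_volga_of_d2_eq_zero hs h0).deriv

lemma d2_eq_zero_of_sub_eq {s : ℝ} (hk : x - k = s ^ 2 * (T - t) / 2) : d2 t T x k s = 0 := by
  unfold d2
  rcases eq_or_ne (s * √(T - t)) 0 with hzero | hne
  · simp [hzero] -- the first term is the junk value `(x - k) / 0 = 0`
  obtain ⟨hs, hsqrt⟩ := mul_ne_zero_iff.1 hne
  rw [hk]
  field_simp
  rw [Real.sq_sqrt (Real.sqrt_ne_zero'.1 hsqrt).le]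
  ring

end Greeks

theorem bs_third_vol_derivative_zero_vanna (t T x k σ : ℝ) (htT : t < T) (hσ : 0 < σ)
    (hk : x - k = σ ^ 2 * (T - t) / 2) :
    iteratedDeriv 3 (fun s => BS t T x k s) σ = -(T - t) * deriv (fun s => BS t T x k s) σ ∧
    iteratedDeriv 3 (fun s => BS t T x k s) σ =
      -(Real.exp x * (T - t) ^ ((3 : ℝ) / 2) * phi (d1 t T x k σ)) := by
  have hτ : 0 ≤ T - t := (sub_pos.2 htT).le
  have hd2 : d2 t T x k σ = 0 := d2_eq_zero_of_sub_eq hk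
  have hd1 : d1 t T x k σ / σ = √(T - t) := by
    rw [div_eq_iff hσ.ne']
    linear_combination d1_sub_d2 (t := t) (T := T) (x := x) (k := k) σ + hd2
  have hthird : iteratedDeriv 3 (BS t T x k) σ = -(T - t) * vega t T x k σ := by
    rw [iteratedDeriv_three_BS_of_d2_eq_zero hσ.ne' htT hd2, hd1, Real.sq_sqrt hτ]
  have hpow : (T - t) ^ ((3 : ℝ) / 2) = (T - t) * √(T - t) := by
    rw [show (3 : ℝ) / 2 = 1 + 1 / 2 by norm_num, Real.rpow_add' hτ (by norm_num), Real.rpow_one,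
      Real.sqrt_eq_rpow]
  refine ⟨by rw [hthird, (hasDerivAt_BS hσ.ne' htT).deriv], ?_⟩
  rw [hthird, hpow, vega]
  ring
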